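/- arXiv:2511.02459 — 2 statements merged into one kernel-verified Lean document; each statement's English description precedes it below -/
import Mathlib

section
/- Every positive integer n has a unique representation as a sum of non-consecutive Fibonacci numbers F_k with k ≥ 2 (Zeckendorf's theorem). -/
/-!
Mathlib's `Nat.zeckendorf` already gives existence and uniqueness for Zeckendorf representations
as lists of indices (`List.IsZeckendorfRep`: gaps of at least two, all indices at least two).
Listing a finite set of indices in decreasing order turns "no two consecutive indices" into
exactly that gap condition, and sorting is inverse to `List.toFinset` on such lists, so the
theorem transfers to finite sets.
-/

open List

theorem Finset.sum_map_sort {M : Type*} [AddCommMonoid M] {α : Type*} (s : Finset α)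
    (r : α → α → Prop) [DecidableRel r] [IsTrans α r] [Std.Antisymm r] [Std.Total r]
    (f : α → M) : ((s.sort r).map f).sum = ∑ a ∈ s, f a :=
  ((s.sort_perm_toList r).map f).sum_eq.trans (s.sum_map_toList f)

theorem List.isZeckendorfRep_iff {l : List ℕ} :
    l.IsZeckendorfRep ↔ l.Pairwise (fun a b ↦ b + 2 ≤ a) ∧ ∀ a ∈ l, 2 ≤ a := by
  have : Trans (fun a b : ℕ ↦ b + 2 ≤ a) (fun a b ↦ b + 2 ≤ a) (fun a b ↦ b + 2 ≤ a) :=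
    ⟨fun hab hbc ↦ by omega⟩
  simp [IsZeckendorfRep, isChain_iff_pairwise, pairwise_append]

theorem List.IsZeckendorfRep.sort_toFinset {l : List ℕ} (hl : l.IsZeckendorfRep) :
    l.toFinset.sort (· ≥ ·) = l := by
  have hgap := (isZeckendorfRep_iff.1 hl).1
  exact (toFinset_sort _ (hgap.imp (by omega))).2 (hgap.imp (by omega))

theorem Finset.isZeckendorfRep_sort_iff {s : Finset ℕ} :
    (s.sort (· ≥ ·)).IsZeckendorfRep ↔ (∀ k ∈ s, 2 ≤ k) ∧ ∀ k ∈ s, k + 1 ∉ s := by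
  rw [isZeckendorfRep_iff, and_comm]
  simp only [mem_sort]
  refine and_congr_right fun _ ↦ ⟨fun hgap k hk hk1 ↦ ?_, fun hsep ↦ ?_⟩
  · have : Std.Symm fun a b : ℕ ↦ a + 1 ≠ b ∧ b + 1 ≠ a := ⟨fun _ _ h ↦ h.symm⟩
    have hne : (s.sort (· ≥ ·)).Pairwise (fun a b ↦ a + 1 ≠ b ∧ b + 1 ≠ a) :=
      hgap.imp (by omega)
    exact (hne.forall ((mem_sort _).2 hk) ((mem_sort _).2 hk1) (by omega)).1 rfl
  · refine s.sortedGT_sort.pairwise.imp_of_mem fun ha hb hba ↦ ?_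
    have : _ + 1 ≠ _ := fun h ↦ hsep _ ((mem_sort _).1 hb) (h ▸ (mem_sort _).1 ha)
    omega

/-- Zeckendorf's theorem: every positive integer has a unique representation as a sum of
non-consecutive Fibonacci numbers `F_k` with `k ≥ 2`. -/
theorem zeckendorf (n : ℕ) :
    ∃! s : Finset ℕ,
      (∀ k ∈ s, 2 ≤ k) ∧ (∀ k ∈ s, k + 1 ∉ s) ∧ ∑ k ∈ s, Nat.fib k = n := by
  have hrep := Nat.isZeckendorfRep_zeckendorf n
  refine ⟨(Nat.zeckendorf n).toFinset, ?_, fun s ⟨h2, hsep, hsum⟩ ↦ ?_⟩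
  · beta_reduce
    rw [← and_assoc, ← Finset.isZeckendorfRep_sort_iff, ← Finset.sum_map_sort _ (· ≥ ·),
      hrep.sort_toFinset]
    exact ⟨hrep, Nat.sum_zeckendorf_fib n⟩
  · have hsort := Finset.isZeckendorfRep_sort_iff.2 ⟨h2, hsep⟩
    rw [← s.sort_toFinset (· ≥ ·), ← Nat.zeckendorf_sum_fib hsort, Finset.sum_map_sort, hsum]
end

section
/- For d ≥ 3 and any integer p ≥ 1, the matrix E_{kℓ}(p) (identity plus p in off-diagonal position (k,ℓ)) can be written as a product of at most 27·⌈log₂(p+1)⌉ elementary transvection matrices E_{ij}(±1). -/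
/-!
Fix a third index `m` and consider the matrices `1 + x E_{kl} + y E_{ml}`. Right multiplication by
`E_{kl}(±1)` or `E_{ml}(±1)` shifts `x` or `y` by `±1`, and conjugation by `E_{km}(±1)` or
`E_{mk}(±1)` performs `x ↦ x ± y` or `y ↦ y ± x` (the commutator identity
`[E_{km}(a), E_{ml}(b)] = E_{kl}(ab)`), at a cost of one or two letters.

A pair `(X, Y)` within `1/2` of the line `x = φ y` is reached from `(X - Y - c, 2Y - X)`, with
`c ∈ {-1, 0, 1}`, by six letters. The smaller pair is again within `1/2` of the line (the old distance
is multiplied by `φ²` and `c` is its rounding) and its first coordinate is less than half of `X`,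
so such a pair costs `6 log₂ X` letters. The pair `(p F_{2r+1}, p F_{2r})` is within `p ψ^{2r}` of
the line, and `r` Euclidean steps down the Fibonacci sequence, four letters each, turn it into
`(p, 0)`. With `r = ⌈log₂(p+1)⌉ + 1` this costs `22 ⌈log₂(p+1)⌉ + 16` letters, which is within the
bound once `p ≥ 8`; smaller `p` are written as `p` letters `E_{kl}(1)`.
-/

open Real goldenRatio

namespace Matrix

variable {ι R : Type*} [DecidableEq ι] [CommRing R]

def IsElementaryTransvection (M : Matrix ι ι R) : Prop :=
  ∃ i j : ι, ∃ ε : R, i ≠ j ∧ (ε = 1 ∨ ε = -1) ∧ M = transvection i j ε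

def ElemWordLE [Fintype ι] (A : Matrix ι ι R) (N : ℕ) : Prop :=
  ∃ L : List (Matrix ι ι R), L.length ≤ N ∧ (∀ M ∈ L, IsElementaryTransvection M) ∧ L.prod = A

def pairTransvection (k l m : ι) (x y : R) : Matrix ι ι R :=
  1 + single k l x + single m l y

namespace ElemWordLE

variable [Fintype ι] {A B : Matrix ι ι R} {a b : ℕ}

theorem one : ElemWordLE (1 : Matrix ι ι R) 0 :=
  ⟨[], le_rfl, by simp, rfl⟩

theorem mono (hA : ElemWordLE A a) (hab : a ≤ b) : ElemWordLE A b :=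
  let ⟨L, hlen, hL, hprod⟩ := hA
  ⟨L, hlen.trans hab, hL, hprod⟩

theorem mul (hA : ElemWordLE A a) (hB : ElemWordLE B b) : ElemWordLE (A * B) (a + b) := by
  obtain ⟨LA, hlenA, hLA, rfl⟩ := hA
  obtain ⟨LB, hlenB, hLB, rfl⟩ := hB
  refine ⟨LA ++ LB, by simp only [List.length_append]; omega, ?_, List.prod_append⟩
  simpa only [List.mem_append, or_imp, forall_and] using ⟨hLA, hLB⟩

theorem of_isElementaryTransvection (hA : IsElementaryTransvection A) : ElemWordLE A 1 :=
  ⟨[A], le_rfl, by simpa using hA, List.prod_singleton⟩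

end ElemWordLE

variable {k l m : ι}

theorem pairTransvection_comm (x y : R) :
    pairTransvection k l m x y = pairTransvection m l k y x := by
  simp only [pairTransvection]
  abel

@[simp]
theorem pairTransvection_zero_right (x : R) :
    pairTransvection k l m x 0 = transvection k l x := by
  simp [pairTransvection, transvection]

variable [Fintype ι]

theorem pairTransvection_mul_transvection (hlk : l ≠ k) (x y e : R) :
    pairTransvection k l m x y * transvection k l e = pairTransvection k l m (x + e) y := by
  simp only [pairTransvection, transvection, Matrix.mul_add, mul_one, Matrix.add_mul, one_mul,
    ne_eq, hlk, not_false_eq_true, single_mul_single_of_ne, add_zero, single_add]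
  abel

theorem transvection_mul_pairTransvection_mul_transvection (hmk : m ≠ k) (hlk : l ≠ k)
    (a x y : R) :
    transvection k m a * pairTransvection k l m x y * transvection k m (-a) =
      pairTransvection k l m (x + a * y) y := by
  simp only [transvection, pairTransvection, Matrix.mul_add, mul_one, Matrix.add_mul, one_mul,
    ne_eq, hmk, hlk, not_false_eq_true, single_mul_single_of_ne, add_zero, single_mul_single_same,
    ← single_neg, mul_neg, single_add]
  abel

theorem elemWordLE_transvection {i j : ι} (hij : i ≠ j) (x : ℤ) :
    ElemWordLE (transvection i j x) x.natAbs := by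
  have step : ∀ (x ε : ℤ) (n : ℕ), (ε = 1 ∨ ε = -1) → ElemWordLE (transvection i j x) n →
      ElemWordLE (transvection i j (x + ε)) (n + 1) := fun x ε n hε hx => by
    rw [← transvection_mul_transvection_same _ _ hij]
    exact hx.mul (.of_isElementaryTransvection ⟨i, j, ε, hij, hε, rfl⟩)
  induction x using Int.induction_on with
  | zero => simpa using ElemWordLE.one
  | succ n ih => exact (step _ 1 _ (.inl rfl) ih).mono (by omega)
  | pred n ih => exact (step _ (-1) _ (.inr rfl) ih).mono (by omega)

namespace ElemWordLE

variable {x y : ℤ} {n : ℕ}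

theorem pair_add_fst (hlk : l ≠ k) (h : ElemWordLE (pairTransvection k l m x y) n) (e : ℤ) :
    ElemWordLE (pairTransvection k l m (x + e) y) (n + e.natAbs) := by
  rw [← pairTransvection_mul_transvection hlk]
  exact h.mul (elemWordLE_transvection hlk.symm e)

theorem pair_add_snd (hlm : l ≠ m) (h : ElemWordLE (pairTransvection k l m x y) n) (e : ℤ) :
    ElemWordLE (pairTransvection k l m x (y + e)) (n + e.natAbs) := by
  rw [pairTransvection_comm] at h ⊢
  exact h.pair_add_fst hlm e

theorem pair_conj_fst (hmk : m ≠ k) (hlk : l ≠ k) (h : ElemWordLE (pairTransvection k l m x y) n)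
    (a : ℤ) : ElemWordLE (pairTransvection k l m (x + a * y) y) (n + 2 * a.natAbs) := by
  rw [← transvection_mul_pairTransvection_mul_transvection hmk hlk]
  refine (((elemWordLE_transvection hmk.symm a).mul h).mul
    (elemWordLE_transvection hmk.symm (-a))).mono ?_
  rw [Int.natAbs_neg]
  omega

theorem pair_conj_snd (hkm : k ≠ m) (hlm : l ≠ m) (h : ElemWordLE (pairTransvection k l m x y) n)
    (a : ℤ) : ElemWordLE (pairTransvection k l m x (y + a * x)) (n + 2 * a.natAbs) := by
  rw [pairTransvection_comm] at h ⊢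
  exact h.pair_conj_fst hkm hlm a

end ElemWordLE

end Matrix

namespace Real

theorem eight_fifths_lt_goldenRatio : 8 / 5 < φ := by
  nlinarith [goldenRatio_sq, goldenRatio_pos]

theorem goldenRatio_lt_thirteen_eighths : φ < 13 / 8 := by
  nlinarith [goldenRatio_sq, goldenRatio_pos]

theorem goldenConj_sq_le_half : ψ ^ 2 ≤ 1 / 2 := by
  rw [goldenConj_sq, ← one_sub_goldenConj]
  linarith [eight_fifths_lt_goldenRatio]

end Real

def NearGolden (X Y : ℤ) : Prop := |(X : ℝ) - φ * Y| ≤ 1 / 2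

namespace NearGolden

variable {X Y : ℤ}

theorem snd_bounds (h : NearGolden X Y) (hX : 0 ≤ X) : 0 ≤ Y ∧ 16 * Y ≤ 10 * X + 5 := by
  obtain ⟨hlo, hhi⟩ := abs_le.1 h
  have hXr : (0 : ℝ) ≤ X := by exact_mod_cast hX
  have hY : 0 ≤ Y := by
    by_contra! hY
    have hYr : (Y : ℝ) ≤ -1 := by exact_mod_cast Int.le_sub_one_of_lt hY
    nlinarith [one_lt_goldenRatio]
  have hYr : (0 : ℝ) ≤ Y := by exact_mod_cast hY
  refine ⟨hY, ?_⟩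
  have : 16 * (Y : ℝ) ≤ 10 * X + 5 := by nlinarith [eight_fifths_lt_goldenRatio]
  exact_mod_cast this

theorem exists_descent (h : NearGolden X Y) (hX : 16 ≤ X) :
    ∃ c : ℤ, c.natAbs ≤ 1 ∧ 0 ≤ X - Y - c ∧ 2 * (X - Y - c) < X ∧
      NearGolden (X - Y - c) (2 * Y - X) := by
  set δ : ℝ := X - φ * Y
  obtain ⟨hlo, hhi⟩ := abs_le.1 h
  obtain ⟨hY, hYX⟩ := h.snd_bounds (by omega)
  set c := round (φ ^ 2 * δ)
  obtain ⟨hclo, hchi⟩ := abs_le.1 (abs_sub_round (φ ^ 2 * δ))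
  have key : ((X - Y - c : ℤ) : ℝ) - φ * ((2 * Y - X : ℤ) : ℝ) = φ ^ 2 * δ - c := by
    push_cast
    linear_combination (-(X : ℝ) + (φ + 1) * Y) * goldenRatio_sq
  have hsq : φ ^ 2 * δ = (φ + 1) * X - (2 * φ + 1) * Y := by
    linear_combination ((X : ℝ) - (φ + 1) * Y) * goldenRatio_sq
  have hφ := eight_fifths_lt_goldenRatio
  have hφ' := goldenRatio_lt_thirteen_eighths
  have hXr : (16 : ℝ) ≤ X := by exact_mod_cast hX
  have hc : c.natAbs ≤ 1 := by
    have h1 : (c : ℝ) < 2 := by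
      nlinarith [mul_le_mul_of_nonneg_left hhi (by linarith : (0 : ℝ) ≤ φ + 1), goldenRatio_sq]
    have h2 : (-2 : ℝ) < c := by
      nlinarith [mul_le_mul_of_nonneg_left hlo (by linarith : (0 : ℝ) ≤ φ + 1), goldenRatio_sq]
    have h1' : c < 2 := by exact_mod_cast h1
    have h2' : -2 < c := by exact_mod_cast h2
    omega
  refine ⟨c, hc, by omega, ?_, by rw [NearGolden, key]; exact abs_sub_round _⟩
  have : (X : ℝ) < 2 * Y + 2 * c := by
    nlinarith [mul_nonneg (by linarith : (0 : ℝ) ≤ φ - 8 / 5) (by linarith : (0 : ℝ) ≤ X - 16)]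
  have : X < 2 * Y + 2 * c := by exact_mod_cast this
  omega

end NearGolden

theorem nearGolden_mul_fib {p r : ℕ} (h : 2 * p ≤ 2 ^ r) :
    NearGolden (p * Nat.fib (2 * r + 1)) (p * Nat.fib (2 * r)) := by
  have hp : (2 * p : ℝ) ≤ 2 ^ r := by exact_mod_cast h
  rw [NearGolden]
  push_cast
  rw [← mul_assoc, mul_comm φ, mul_assoc, ← mul_sub, fib_succ_sub_goldenRatio_mul_fib, pow_mul,
    abs_mul, Nat.abs_cast, abs_of_nonneg (pow_nonneg (sq_nonneg ψ) r)]
  calc (p : ℝ) * (ψ ^ 2) ^ r ≤ p * (1 / 2) ^ r := by gcongr; exact goldenConj_sq_le_half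
    _ ≤ 1 / 2 := by
      rw [div_pow, one_pow, mul_one_div, div_le_iff₀ (by positivity)]
      linarith

theorem Nat.fib_add_one_le_two_pow : ∀ n : ℕ, fib (n + 1) ≤ 2 ^ n
  | 0 => by simp
  | n + 1 => by
    have := fib_add_one_le_two_pow n
    have := fib_le_fib_succ (n := n)
    rw [fib_add_two, pow_succ]
    omega

namespace Matrix

variable {ι : Type*} [DecidableEq ι] [Fintype ι] {k l m : ι}

theorem elemWordLE_pairTransvection (hlk : l ≠ k) (hlm : l ≠ m) (x y : ℤ) :
    ElemWordLE (pairTransvection k l m x y) (x.natAbs + y.natAbs) := by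
  have h₀ : ElemWordLE (pairTransvection k l m (0 : ℤ) 0) 0 := by
    simpa using ElemWordLE.one
  simpa using (h₀.pair_add_fst hlk x).pair_add_snd hlm y

namespace ElemWordLE

variable {n : ℕ}

theorem pair_of_descent (hkl : k ≠ l) (hkm : k ≠ m) (hml : m ≠ l) {X Y c : ℤ} (hc : c.natAbs ≤ 1)
    (h : ElemWordLE (pairTransvection k l m (X - Y - c) (2 * Y - X)) n) :
    ElemWordLE (pairTransvection k l m X Y) (n + 6) := by
  have h' := (((h.pair_conj_snd hkm hml.symm 1).pair_add_snd hml.symm c).pair_conj_fst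
    hkm.symm hkl.symm 1).pair_add_fst hkl.symm c
  convert h'.mono (b := n + 6) (by simp only [Int.natAbs_one]; omega) using 2 <;> ring

theorem transvection_of_pair_fib (hkl : k ≠ l) (hkm : k ≠ m) (hml : m ≠ l) (p : ℤ) (r : ℕ)
    (h : ElemWordLE (pairTransvection k l m (p * Nat.fib (2 * r + 1)) (p * Nat.fib (2 * r))) n) :
    ElemWordLE (transvection k l p) (n + 4 * r) := by
  induction r generalizing n with
  | zero => simpa using h
  | succ r ih =>
    have e₁ : Nat.fib (2 * (r + 1) + 1) = Nat.fib (2 * r + 1) + Nat.fib (2 * (r + 1)) :=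
      Nat.fib_add_two
    have e₂ : Nat.fib (2 * (r + 1)) = Nat.fib (2 * r) + Nat.fib (2 * r + 1) := Nat.fib_add_two
    have h' := (h.pair_conj_fst hkm.symm hkl.symm (-1)).pair_conj_snd hkm hml.symm (-1)
    simp only [Int.natAbs_neg, Int.natAbs_one] at h'
    refine (ih (n := n + 2 * 1 + 2 * 1) ?_).mono (by omega)
    convert h' using 2 <;> push_cast [e₁, e₂] <;> ring

end ElemWordLE

theorem elemWordLE_pairTransvection_of_nearGolden (hkl : k ≠ l) (hkm : k ≠ m) (hml : m ≠ l)
    (t : ℕ) {X Y : ℤ} (h : NearGolden X Y) (hX : 0 ≤ X) (hXt : X < 2 ^ t) :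
    ElemWordLE (pairTransvection k l m X Y) (6 * t) := by
  have base : ∀ {s : ℕ} {X Y : ℤ}, NearGolden X Y → 0 ≤ X → X < 16 → X < 2 ^ s →
      ElemWordLE (pairTransvection k l m X Y) (6 * s) := by
    intro s X Y h hX h16 hXs
    obtain ⟨hY, hYX⟩ := h.snd_bounds hX
    refine (elemWordLE_pairTransvection hkl.symm hml.symm X Y).mono ?_
    rcases le_or_gt s 3 with hs | hs
    · interval_cases s <;> omega
    · omega
  induction t generalizing X Y with
  | zero => exact base h hX (by rw [pow_zero] at hXt; omega) hXt
  | succ t ih =>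
    rcases lt_or_ge X 16 with hsmall | hlarge
    · exact base h hX hsmall hXt
    · obtain ⟨c, hc, hX', hhalf, h'⟩ := h.exists_descent hlarge
      rw [pow_succ] at hXt
      exact (ih h' hX' (by omega)).pair_of_descent hkl hkm hml hc

theorem elemWordLE_transvection_clog (hkl : k ≠ l) (hkm : k ≠ m) (hml : m ≠ l) {p : ℕ}
    (hp : 1 ≤ p) : ElemWordLE (transvection k l (p : ℤ)) (27 * Nat.clog 2 (p + 1)) := by
  set c := Nat.clog 2 (p + 1)
  have hpc : p + 1 ≤ 2 ^ c := Nat.le_pow_clog one_lt_two _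
  have hc : 1 ≤ c := Nat.clog_pos one_lt_two (by omega)
  rcases le_or_gt c 3 with hc3 | hc3
  · have : 2 ^ c ≤ 2 ^ 3 := Nat.pow_le_pow_right two_pos hc3
    refine (elemWordLE_transvection hkl (p : ℤ)).mono ?_
    rw [Int.natAbs_natCast]
    omega
  · have hnear := nearGolden_mul_fib (p := p) (r := c + 1) (by rw [pow_succ]; omega)
    have hX : p * Nat.fib (2 * (c + 1) + 1) < 2 ^ (3 * c + 2) :=
      calc p * Nat.fib (2 * (c + 1) + 1) ≤ p * 2 ^ (2 * (c + 1)) :=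
            Nat.mul_le_mul_left _ (Nat.fib_add_one_le_two_pow _)
        _ < 2 ^ c * 2 ^ (2 * (c + 1)) := Nat.mul_lt_mul_of_pos_right (by omega) (by positivity)
        _ = 2 ^ (3 * c + 2) := by rw [← pow_add]; ring_nf
    have hword := elemWordLE_pairTransvection_of_nearGolden hkl hkm hml (3 * c + 2) hnear
      (by positivity) (by exact_mod_cast hX)
    exact (hword.transvection_of_pair_fib hkl hkm hml p (c + 1)).mono (by omega)

end Matrix

/-- Riley's lemma: for `d ≥ 3` and `p ≥ 1`, the matrix `E_{kℓ}(p)` is a product of at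
most `27·⌈log₂(p+1)⌉` elementary transvections `E_{ij}(±1)`. -/
theorem transvection_power_decomposition (d : ℕ) (hd : 3 ≤ d)
    (k l : Fin d) (hkl : k ≠ l) (p : ℤ) (hp : 1 ≤ p) :
    ∃ L : List (Matrix (Fin d) (Fin d) ℤ),
      L.length ≤ 27 * Nat.clog 2 (p.toNat + 1) ∧
      (∀ M ∈ L, ∃ i j : Fin d, ∃ ε : ℤ, i ≠ j ∧ (ε = 1 ∨ ε = -1) ∧
        M = 1 + Matrix.single i j ε) ∧
      L.prod = 1 + Matrix.single k l p := by
  obtain ⟨m, hmk, hml⟩ := Fin.exists_ne_and_ne_of_two_lt k l hd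
  lift p to ℕ using by omega
  rw [Int.toNat_natCast]
  exact Matrix.elemWordLE_transvection_clog hkl hmk.symm hml (by exact_mod_cast hp)
end
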